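/- The following two optimal values coincide: sup over Hermitian PSD matrices S with tr(S) ≤ P of [ min over i = 1,…,K of det(I + H_sᴴ S H_s)/(1 + (h_iᴴ S h_i)/σ_i²) ] equals sup over vectors Γ = (Γ_1,…,Γ_K) with Γ_i ≥ 0 of [ min over i = 1,…,K of g(Γ_1,…,Γ_K)/(1 + Γ_i/σ_i²) ]. -/

import Mathlib

open Matrix ComplexOrder

/-- The (real) quadratic form `hᴴ S h`. -/
noncomputable def quadForm {N : ℕ} (h : Fin N → ℂ) (S : Matrix (Fin N) (Fin N) ℂ) : ℝ :=
  (star h ⬝ᵥ S.mulVec h).re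

/-- The (real) value `det(I + Hsᴴ S Hs)`. -/
noncomputable def detVal {N M : ℕ} (Hs : Matrix (Fin N) (Fin M) ℂ)
    (S : Matrix (Fin N) (Fin N) ℂ) : ℝ :=
  ((1 + Hs.conjTranspose * S * Hs).det).re

/-- `g(Γ₁,…,Γ_K)`: the optimal value of the CR spectrum sharing problem. -/
noncomputable def gFun {N M K : ℕ} (Hs : Matrix (Fin N) (Fin M) ℂ) (h : Fin K → Fin N → ℂ)
    (P : ℝ) (Γ : Fin K → ℝ) : ℝ :=
  sSup {x : ℝ | ∃ S : Matrix (Fin N) (Fin N) ℂ, S.PosSemidef ∧ S.trace.re ≤ P ∧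
    (∀ i, quadForm (h i) S ≤ Γ i) ∧ x = detVal Hs S}

/-! For feasible `S`, the choice `Γᵢ = hᵢᴴ S hᵢ` gives `det(I + Hsᴴ S Hs) ≤ g(Γ)`, so each value
on the left is dominated by one on the right. Conversely, for `Γ ≥ 0` let `j` maximise `Γᵢ / σᵢ²`:
every `S` feasible for `g(Γ)` has `hᵢᴴ S hᵢ / σᵢ² ≤ Γⱼ / σⱼ²` for all `i`, so
`g(Γ) / (1 + Γⱼ / σⱼ²)` is at most the left supremum. All suprema are over bounded sets because
`det(I + Xᴴ X) ≤ tr(I + Xᴴ X) ^ M` and the Frobenius norm is submultiplicative. -/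

open scoped Matrix.Norms.Frobenius

namespace Matrix

variable {𝕜 : Type*} [RCLike 𝕜] {m n : Type*} [Fintype m] [Fintype n]

lemma PosSemidef.re_det_le_re_trace_pow [DecidableEq n] {A : Matrix n n 𝕜} (hA : A.PosSemidef) :
    RCLike.re A.det ≤ RCLike.re A.trace ^ Fintype.card n := by
  have hev := hA.eigenvalues_nonneg
  rw [hA.isHermitian.det_eq_prod_eigenvalues, hA.isHermitian.trace_eq_sum_eigenvalues,
    ← RCLike.ofReal_prod, ← RCLike.ofReal_sum, RCLike.ofReal_re, RCLike.ofReal_re,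
    ← Finset.card_univ, ← Finset.prod_const]
  exact Finset.prod_le_prod (fun i _ => hev i)
    fun i _ => Finset.single_le_sum (fun j _ => hev j) (Finset.mem_univ i)

lemma frobenius_norm_sq_eq_re_trace (X : Matrix m n 𝕜) : ‖X‖ ^ 2 = RCLike.re (Xᴴ * X).trace := by
  rw [frobenius_norm_def, ← Real.rpow_natCast, ← Real.rpow_mul (by positivity), Finset.sum_comm]
  simp only [Matrix.trace, Matrix.diag, Matrix.mul_apply, conjTranspose_apply, RCLike.star_def,
    RCLike.conj_mul, map_sum]
  norm_num

end Matrix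

theorem csSup_eq_csSup_of_forall_exists_le_of_forall_le_csSup {α : Type*}
    [ConditionallyCompleteLattice α] {s t : Set α} (hs : s.Nonempty) (ht : t.Nonempty)
    (hst : ∀ x ∈ s, ∃ y ∈ t, x ≤ y) (hts : ∀ y ∈ t, y ≤ sSup s) : sSup s = sSup t := by
  have htb : BddAbove t := ⟨sSup s, hts⟩
  refine le_antisymm (csSup_le hs fun x hx => ?_) (csSup_le ht hts)
  obtain ⟨y, hy, hxy⟩ := hst x hx
  exact le_csSup_of_le htb hy hxy

section

variable {N M K : ℕ} (Hs : Matrix (Fin N) (Fin M) ℂ) {S : Matrix (Fin N) (Fin N) ℂ}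

lemma quadForm_nonneg (hS : S.PosSemidef) (x : Fin N → ℂ) : 0 ≤ quadForm x S :=
  hS.re_dotProduct_nonneg x

lemma detVal_nonneg (hS : S.PosSemidef) : 0 ≤ detVal Hs S :=
  Complex.nonneg_iff.mp ((PosSemidef.one.add (hS.conjTranspose_mul_mul_same Hs)).det_nonneg) |>.1

lemma detVal_le {P : ℝ} (hS : S.PosSemidef) (htr : S.trace.re ≤ P) :
    detVal Hs S ≤ (M + P * ‖Hs‖ ^ 2) ^ M := by
  obtain ⟨C, rfl⟩ : ∃ C : Matrix (Fin N) (Fin N) ℂ, S = Cᴴ * C := by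
    open scoped MatrixOrder in exact CStarAlgebra.nonneg_iff_eq_star_mul_self.mp hS.nonneg
  have hX : Hsᴴ * (Cᴴ * C) * Hs = (C * Hs)ᴴ * (C * Hs) := by
    simp only [conjTranspose_mul, Matrix.mul_assoc]
  have htrace : (1 + (C * Hs)ᴴ * (C * Hs)).trace.re = M + ‖C * Hs‖ ^ 2 := by
    rw [trace_add, Complex.add_re, trace_one, frobenius_norm_sq_eq_re_trace]
    simp
  have hC : ‖C‖ ^ 2 ≤ P := by rwa [frobenius_norm_sq_eq_re_trace]
  calc detVal Hs (Cᴴ * C) ≤ (1 + (C * Hs)ᴴ * (C * Hs)).trace.re ^ M := by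
        simpa [detVal, hX] using
          (PosSemidef.one.add (posSemidef_conjTranspose_mul_self (C * Hs))).re_det_le_re_trace_pow
    _ ≤ (M + P * ‖Hs‖ ^ 2) ^ M := by
        rw [htrace]
        gcongr
        calc ‖C * Hs‖ ^ 2 ≤ (‖C‖ * ‖Hs‖) ^ 2 := by gcongr; exact frobenius_norm_mul C Hs
          _ ≤ P * ‖Hs‖ ^ 2 := by rw [mul_pow]; gcongr

variable (h : Fin K → Fin N → ℂ) {P : ℝ} {Γ : Fin K → ℝ}

lemma detVal_le_gFun (hS : S.PosSemidef) (htr : S.trace.re ≤ P)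
    (hq : ∀ i, quadForm (h i) S ≤ Γ i) : detVal Hs S ≤ gFun Hs h P Γ :=
  le_csSup ⟨_, by rintro _ ⟨S, hS, htr, -, rfl⟩; exact detVal_le Hs hS htr⟩ ⟨S, hS, htr, hq, rfl⟩

lemma gFun_le (hP : 0 ≤ P) (hΓ : ∀ i, 0 ≤ Γ i) {c : ℝ}
    (hc : ∀ S : Matrix (Fin N) (Fin N) ℂ, S.PosSemidef → S.trace.re ≤ P →
      (∀ i, quadForm (h i) S ≤ Γ i) → detVal Hs S ≤ c) :
    gFun Hs h P Γ ≤ c :=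
  csSup_le ⟨_, 0, .zero, by simpa using hP, fun i => by simpa [quadForm] using hΓ i, rfl⟩
    (by rintro _ ⟨S, hS, htr, hq, rfl⟩; exact hc S hS htr hq)

variable (σ : Fin K → ℝ)

lemma bddAbove_iInf_detVal_div [NeZero K] :
    BddAbove {v : ℝ | ∃ S : Matrix (Fin N) (Fin N) ℂ, S.PosSemidef ∧ S.trace.re ≤ P ∧
      v = ⨅ i : Fin K, detVal Hs S / (1 + quadForm (h i) S / (σ i) ^ 2)} := by
  refine ⟨(M + P * ‖Hs‖ ^ 2) ^ M, ?_⟩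
  rintro _ ⟨S, hS, htr, rfl⟩
  calc ⨅ i : Fin K, detVal Hs S / (1 + quadForm (h i) S / (σ i) ^ 2)
      ≤ detVal Hs S / (1 + quadForm (h 0) S / (σ 0) ^ 2) :=
        ciInf_le (Set.finite_range _).bddBelow _
    _ ≤ detVal Hs S := div_le_self (detVal_nonneg Hs hS)
        (le_add_of_nonneg_right (div_nonneg (quadForm_nonneg hS _) (sq_nonneg _)))
    _ ≤ _ := detVal_le Hs hS htr

lemma iInf_detVal_div_le_iInf_gFun_div (hS : S.PosSemidef) (htr : S.trace.re ≤ P) :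
    ⨅ i : Fin K, detVal Hs S / (1 + quadForm (h i) S / (σ i) ^ 2) ≤
      ⨅ i : Fin K, gFun Hs h P (fun j => quadForm (h j) S) / (1 + quadForm (h i) S / (σ i) ^ 2) :=
  ciInf_mono (Set.finite_range _).bddBelow fun i => by
    have := quadForm_nonneg hS (h i)
    gcongr
    exact detVal_le_gFun Hs h hS htr fun j => le_rfl

lemma iInf_gFun_div_le_sSup [NeZero K] (hP : 0 ≤ P) (hΓ : ∀ i, 0 ≤ Γ i) :
    ⨅ i : Fin K, gFun Hs h P Γ / (1 + Γ i / (σ i) ^ 2) ≤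
      sSup {v : ℝ | ∃ S : Matrix (Fin N) (Fin N) ℂ, S.PosSemidef ∧ S.trace.re ≤ P ∧
        v = ⨅ i : Fin K, detVal Hs S / (1 + quadForm (h i) S / (σ i) ^ 2)} := by
  obtain ⟨j, hj⟩ := Finite.exists_max fun i => Γ i / (σ i) ^ 2
  have hdj : 0 < 1 + Γ j / (σ j) ^ 2 := by have := hΓ j; positivity
  refine (ciInf_le (Set.finite_range _).bddBelow j).trans ?_
  rw [div_le_iff₀ hdj]
  refine gFun_le Hs h hP hΓ fun S hS htr hq => ?_
  rw [← div_le_iff₀ hdj]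
  refine le_csSup_of_le (bddAbove_iInf_detVal_div Hs h σ) ⟨S, hS, htr, rfl⟩ (le_ciInf fun i => ?_)
  have := quadForm_nonneg hS (h i)
  have := detVal_nonneg Hs hS
  gcongr _ / (1 + ?_)
  exact (div_le_div_of_nonneg_right (hq i) (sq_nonneg _)).trans (hj i)

end

theorem stmt_1_general (N M K : ℕ) [NeZero K]
    (P : ℝ) (hP : 0 < P) (σ : Fin K → ℝ)
    (Hs : Matrix (Fin N) (Fin M) ℂ) (h : Fin K → Fin N → ℂ) :
    sSup {v : ℝ | ∃ S : Matrix (Fin N) (Fin N) ℂ, S.PosSemidef ∧ S.trace.re ≤ P ∧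
        v = ⨅ i : Fin K, detVal Hs S / (1 + quadForm (h i) S / (σ i) ^ 2)} =
    sSup {v : ℝ | ∃ Γ : Fin K → ℝ, (∀ i, 0 ≤ Γ i) ∧
        v = ⨅ i : Fin K, gFun Hs h P Γ / (1 + Γ i / (σ i) ^ 2)} := by
  refine csSup_eq_csSup_of_forall_exists_le_of_forall_le_csSup
    ⟨_, 0, .zero, by simpa using hP.le, rfl⟩ ⟨_, 0, fun _ => le_rfl, rfl⟩ ?_ ?_
  · rintro _ ⟨S, hS, htr, rfl⟩
    exact ⟨_, ⟨_, fun i => quadForm_nonneg hS (h i), rfl⟩,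
      iInf_detVal_div_le_iInf_gFun_div Hs h σ hS htr⟩
  · rintro _ ⟨Γ, hΓ, rfl⟩
    exact iInf_gFun_div_le_sSup Hs h σ hP.le hΓ

theorem stmt_1 (N M K : ℕ) [NeZero K] (hN : 0 < N) (hM : 0 < M)
    (P : ℝ) (hP : 0 < P) (σ : Fin K → ℝ) (hσ : ∀ i, 0 < σ i)
    (Hs : Matrix (Fin N) (Fin M) ℂ) (h : Fin K → Fin N → ℂ) :
    sSup {v : ℝ | ∃ S : Matrix (Fin N) (Fin N) ℂ, S.PosSemidef ∧ S.trace.re ≤ P ∧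
        v = ⨅ i : Fin K, detVal Hs S / (1 + quadForm (h i) S / (σ i) ^ 2)} =
    sSup {v : ℝ | ∃ Γ : Fin K → ℝ, (∀ i, 0 ≤ Γ i) ∧
        v = ⨅ i : Fin K, gFun Hs h P Γ / (1 + Γ i / (σ i) ^ 2)} :=
  stmt_1_general N M K P hP σ Hs h
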